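/- Let α, β, γ > 0 with α + β + γ = π and α ≤ β ≤ γ. Then π·sin(γ)/(sin(α) + sin(β) + sin(γ)) ≤ γ, with equality if and only if γ = π/3. -/

import Mathlib

open Real

lemma aux_mul_sin_lt {x y : ℝ} (hx : 0 < x) (hxy : x < y) (hy : y ≤ π) :
    x * Real.sin y < y * Real.sin x := by
  have hy0 : 0 < y := hx.trans hxy
  set t : ℝ := x / y with ht
  have ht0 : 0 < t := div_pos hx hy0
  have ht1 : t < 1 := (div_lt_one hy0).2 hxy
  have key := strictConcaveOn_sin_Icc.2 (Set.mem_Icc.2 ⟨le_rfl, Real.pi_pos.le⟩)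
    (Set.mem_Icc.2 ⟨hy0.le, hy⟩) hy0.ne (by linarith : (0:ℝ) < 1 - t) ht0 (by ring)
  have hxy' : (1 - t) • (0:ℝ) + t • y = x := by
    rw [ht, smul_eq_mul, smul_eq_mul, mul_zero, zero_add, div_mul_cancel₀ x hy0.ne']
  rw [hxy'] at key
  simp only [Real.sin_zero, smul_eq_mul, mul_zero, zero_add] at key
  have : t * Real.sin y < Real.sin x := key
  rw [ht, div_mul_eq_mul_div, div_lt_iff₀ hy0] at this
  nlinarith [this]

lemma aux_mul_sin_le {x y : ℝ} (hx : 0 < x) (hxy : x ≤ y) (hy : y ≤ π) :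
    x * Real.sin y ≤ y * Real.sin x := by
  rcases eq_or_lt_of_le hxy with h | h
  · subst h; rfl
  · exact (aux_mul_sin_lt hx h hy).le

theorem stmt_3 (α β γ : ℝ) (hα : 0 < α) (hβ : 0 < β) (hγ : 0 < γ)
    (hsum : α + β + γ = π) (hab : α ≤ β) (hbc : β ≤ γ) :
    π * Real.sin γ / (Real.sin α + Real.sin β + Real.sin γ) ≤ γ ∧
    (π * Real.sin γ / (Real.sin α + Real.sin β + Real.sin γ) = γ ↔ γ = π / 3) := by
  have hγπ : γ < π := by linarith
  have hsa : 0 < Real.sin α := Real.sin_pos_of_pos_of_lt_pi hα (by linarith)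
  have hsb : 0 < Real.sin β := Real.sin_pos_of_pos_of_lt_pi hβ (by linarith)
  have hsc : 0 < Real.sin γ := Real.sin_pos_of_pos_of_lt_pi hγ hγπ
  have hS : 0 < Real.sin α + Real.sin β + Real.sin γ := by linarith
  have h1 : α * Real.sin γ ≤ γ * Real.sin α := aux_mul_sin_le hα (hab.trans hbc) hγπ.le
  have h2 : β * Real.sin γ ≤ γ * Real.sin β := aux_mul_sin_le hβ hbc hγπ.le
  have hle : π * Real.sin γ / (Real.sin α + Real.sin β + Real.sin γ) ≤ γ := by
    rw [div_le_iff₀ hS]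
    nlinarith
  refine ⟨hle, ?_, ?_⟩
  · intro heq
    by_contra hne
    have hγ3 : π / 3 < γ := by
      rcases lt_trichotomy γ (π/3) with h | h | h
      · linarith
      · exact absurd h hne
      · exact h
    have haγ : α < γ := by
      by_contra h
      push_neg at h
      have : α = γ := le_antisymm (hab.trans hbc) h
      have : β = γ := le_antisymm hbc (by linarith)
      linarith
    have h1' : α * Real.sin γ < γ * Real.sin α := aux_mul_sin_lt hα haγ hγπ.le
    have hlt : π * Real.sin γ < γ * (Real.sin α + Real.sin β + Real.sin γ) := by
      nlinarith
    rw [div_eq_iff hS.ne'] at heq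
    nlinarith
  · intro h
    have ha : α = π / 3 := by linarith
    have hb : β = π / 3 := by linarith
    rw [h, ha, hb, Real.sin_pi_div_three]
    rw [div_eq_iff (by positivity)]
    ring
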